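/- arXiv:2603.05316 — 2 statements merged into one kernel-verified Lean document; each statement's English description precedes it below -/
import Mathlib

section
/- Fix x ∈ D and T > 0. For a continuous f : [0, T] → ℝ^N with f(0) = x and f(t) ∈ D for all t, define I_T(f) ∈ [0, ∞] as (1/2)∫₀^T |g(s) + ∇V(f(s))|² ds if there exists an integrable g : [0, T] → ℝ^N with f(t) = x + ∫₀ᵗ g(s) ds for all t ∈ [0, T], and I_T(f) := +∞ otherwise; define I(F) ∈ [0, ∞] analogously for continuous F : [0, ∞) → ℝ^N with F(0) = x and F(t) ∈ D for all t, using locally integrable g and the integral over [0, ∞). Then for every continuous f : [0, T] → D with f(0) = x: I_T(f) = inf{ I(F) : F continuous on [0, ∞), F(t) ∈ D for all t, F restricted to [0, T] equals f }, and the infimum is attained by extending f beyond time T with a solution of the gradient flow u' = −∇V(u) started at f(T). -/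
open MeasureTheory Finset
open scoped ENNReal

/-- The Freidlin–Wentzell rate functional of a path `f` relative to the
potential `V`, over the time set `s` (either `[0,T]` or `[0,∞)`):
`(1/2)∫_s |g(u) + ∇V(f(u))|² du` if there is a (locally) integrable `g` with
`f(t) = x + ∫₀ᵗ g(u) du` for all `t ∈ s`, and `+∞` otherwise.  Since such a `g`
is a.e. unique, the infimum realizes this value. -/
noncomputable def rateFunctional (N : ℕ) (V : EuclideanSpace ℝ (Fin N) → ℝ)
    (x : EuclideanSpace ℝ (Fin N)) (s : Set ℝ)
    (f : ℝ → EuclideanSpace ℝ (Fin N)) : ℝ≥0∞ :=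
  ⨅ (g : ℝ → EuclideanSpace ℝ (Fin N)) (_ : Measurable g ∧
      ∀ t ∈ s, MeasureTheory.IntegrableOn g (Set.Icc 0 t) (volume : Measure ℝ) ∧
        f t = x + ∫ u in (0:ℝ)..t, g u),
    (1 / 2 : ℝ≥0∞) * ∫⁻ u in s, ENNReal.ofReal (‖g u + gradient V (f u)‖ ^ 2)

noncomputable section FWAux
open Set Metric
open scoped Manifold NNReal
variable {N : ℕ} {l : ℝ} {γ : ℝ → ℂ} {h0 : 0 < N}
open Set Metric
open scoped Manifold NNReal

theorem gamma_ne {l : ℝ} (hl : 0 < l) {γ : ℝ → ℂ}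
    (hper : Function.Periodic γ l) (hinj : Set.InjOn γ (Set.Ico 0 l))
    {a b : ℝ} (h1 : 0 < b - a) (h2 : b - a < l) : γ a ≠ γ b := by
  intro h
  have key : ∀ c : ℝ, γ (c - toIcoDiv hl 0 c • l) = γ c := fun c => hper.sub_zsmul_eq _
  have ma : a - toIcoDiv hl 0 a • l ∈ Set.Ico 0 l := by
    simpa using sub_toIcoDiv_zsmul_mem_Ico hl 0 a
  have mb : b - toIcoDiv hl 0 b • l ∈ Set.Ico 0 l := by
    simpa using sub_toIcoDiv_zsmul_mem_Ico hl 0 b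
  have heq : a - toIcoDiv hl 0 a • l = b - toIcoDiv hl 0 b • l := by
    apply hinj ma mb; rw [key, key, h]
  have : b - a = (toIcoDiv hl 0 b - toIcoDiv hl 0 a) • l := by
    push_cast [sub_smul] at heq ⊢; linarith
  rw [this] at h1 h2
  set n : ℤ := toIcoDiv hl 0 b - toIcoDiv hl 0 a with hn
  rw [zsmul_eq_mul] at h1 h2
  have hpos : (0:ℤ) < n := by
    by_contra hc
    push_neg at hc
    have : (n:ℝ) ≤ 0 := by exact_mod_cast hc
    nlinarith
  have : (1:ℝ) ≤ (n:ℝ) := by exact_mod_cast hpos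
  nlinarith


/-- the index set of pairs -/
def pairsP (N : ℕ) : Finset (Fin N × Fin N) :=
  Finset.univ.filter (fun p : Fin N × Fin N => p.1 < p.2)

/-- the potential -/
def Vf (N : ℕ) (γ : ℝ → ℂ) : EuclideanSpace ℝ (Fin N) → ℝ :=
  fun x => -∑ p ∈ Finset.univ.filter (fun p : Fin N × Fin N => p.1 < p.2),
      Real.log ‖γ (x p.1) - γ (x p.2)‖

/-- the domain -/
def Ds (N : ℕ) (l : ℝ) (h0 : 0 < N) : Set (EuclideanSpace ℝ (Fin N)) :=
  {x | (∀ i j : Fin N, i < j → x i < x j) ∧ ∀ i : Fin N, x i < x ⟨0, h0⟩ + l}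


theorem Vf_eq (N : ℕ) (γ : ℝ → ℂ) (x : EuclideanSpace ℝ (Fin N)) :
    Vf N γ x = -∑ p ∈ pairsP N, Real.log ‖γ (x p.1) - γ (x p.2)‖ := rfl

theorem mem_Ds_gap {y : EuclideanSpace ℝ (Fin N)} (hy : y ∈ Ds N l h0)
    {p : Fin N × Fin N} (hp : p ∈ pairsP N) : 0 < y p.2 - y p.1 ∧ y p.2 - y p.1 < l := by
  have hp' : p.1 < p.2 := by simpa [pairsP] using hp
  obtain ⟨h1, h2⟩ := hy
  have hlt : y p.1 < y p.2 := h1 _ _ hp'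
  have hle : y ⟨0, h0⟩ ≤ y p.1 := by
    rcases eq_or_lt_of_le (show (⟨0, h0⟩ : Fin N) ≤ p.1 from Fin.mk_le_of_le_val (Nat.zero_le _)) with h | h
    · rw [h]
    · exact le_of_lt (h1 _ _ h)
  have := h2 p.2
  constructor <;> linarith

theorem gamma_ne_of_mem_Ds (hl : 0 < l) (hper : Function.Periodic γ l)
    (hinj : Set.InjOn γ (Set.Ico 0 l)) {y : EuclideanSpace ℝ (Fin N)} (hy : y ∈ Ds N l h0)
    {p : Fin N × Fin N} (hp : p ∈ pairsP N) : γ (y p.1) - γ (y p.2) ≠ 0 := by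
  obtain ⟨hg1, hg2⟩ := mem_Ds_gap hy hp
  exact sub_ne_zero_of_ne (gamma_ne hl hper hinj hg1 hg2)

theorem Ds_isOpen : IsOpen (Ds N l h0) := by
  have h1 : IsOpen {x : EuclideanSpace ℝ (Fin N) | ∀ i j : Fin N, i < j → x i < x j} := by
    have : {x : EuclideanSpace ℝ (Fin N) | ∀ i j : Fin N, i < j → x i < x j} =
        ⋂ (i : Fin N), ⋂ (j : Fin N), ⋂ (_ : i < j), {x | x i < x j} := by
      ext x; simp [Set.mem_iInter]
    rw [this]
    exact isOpen_iInter_of_finite fun i => isOpen_iInter_of_finite fun j =>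
      isOpen_iInter_of_finite fun _ => isOpen_lt
        (EuclideanSpace.proj i).continuous (EuclideanSpace.proj j).continuous
  have h2 : IsOpen {x : EuclideanSpace ℝ (Fin N) | ∀ i : Fin N, x i < x ⟨0, h0⟩ + l} := by
    have : {x : EuclideanSpace ℝ (Fin N) | ∀ i : Fin N, x i < x ⟨0, h0⟩ + l} =
        ⋂ (i : Fin N), {x | x i < x ⟨0, h0⟩ + l} := by ext x; simp [Set.mem_iInter]
    rw [this]
    exact isOpen_iInter_of_finite fun i => isOpen_lt (EuclideanSpace.proj i).continuous
      (((EuclideanSpace.proj (⟨0, h0⟩ : Fin N)).continuous).add continuous_const)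
  exact h1.inter h2

theorem Vf_contDiffAt (hl : 0 < l) (hγ : ContDiff ℝ 3 γ) (hper : Function.Periodic γ l)
    (hinj : Set.InjOn γ (Set.Ico 0 l)) {y : EuclideanSpace ℝ (Fin N)} (hy : y ∈ Ds N l h0) :
    ContDiffAt ℝ 2 (Vf N γ) y := by
  apply ContDiffAt.neg
  apply ContDiffAt.sum
  intro p hp
  have hcoord : ∀ i : Fin N, ContDiffAt ℝ 2 (fun x : EuclideanSpace ℝ (Fin N) => γ (x i)) y := by
    intro i
    have hproj : ContDiffAt ℝ 2 (fun x : EuclideanSpace ℝ (Fin N) => x i) y := by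
      have := (EuclideanSpace.proj (𝕜 := ℝ) i).contDiff (n := 2)
      exact this.contDiffAt.congr_of_eventuallyEq (by filter_upwards with z; simp)
    exact ((hγ.of_le (by norm_num)).contDiffAt.comp y hproj : )
  have h1 : ContDiffAt ℝ 2 (fun x : EuclideanSpace ℝ (Fin N) => γ (x p.1) - γ (x p.2)) y :=
    (hcoord p.1).sub (hcoord p.2)
  have hne : γ (y p.1) - γ (y p.2) ≠ 0 := gamma_ne_of_mem_Ds hl hper hinj hy hp
  exact (h1.norm ℝ hne).log (norm_ne_zero_iff.mpr hne)



theorem chord_le_l (hl : 0 < l) (hγ : ContDiff ℝ 3 γ) (hper : Function.Periodic γ l)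
    (hunit : ∀ t, ‖deriv γ t‖ = 1) (a b : ℝ) : ‖γ a - γ b‖ ≤ l := by
  have hlip : LipschitzWith 1 γ := by
    apply lipschitzWith_of_nnnorm_deriv_le (hγ.differentiable (by norm_num))
    intro t
    simp only [← NNReal.coe_le_coe, coe_nnnorm, hunit, NNReal.coe_one, le_refl]
  have ka : γ (a - toIcoDiv hl 0 a • l) = γ a := hper.sub_zsmul_eq _
  have kb : γ (b - toIcoDiv hl 0 b • l) = γ b := hper.sub_zsmul_eq _
  have ma : a - toIcoDiv hl 0 a • l ∈ Set.Ico 0 l := by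
    simpa using sub_toIcoDiv_zsmul_mem_Ico hl 0 a
  have mb : b - toIcoDiv hl 0 b • l ∈ Set.Ico 0 l := by
    simpa using sub_toIcoDiv_zsmul_mem_Ico hl 0 b
  calc ‖γ a - γ b‖ = dist (γ (a - toIcoDiv hl 0 a • l)) (γ (b - toIcoDiv hl 0 b • l)) := by
        rw [ka, kb, dist_eq_norm]
    _ ≤ 1 * dist (a - toIcoDiv hl 0 a • l) (b - toIcoDiv hl 0 b • l) := hlip.dist_le_mul _ _
    _ ≤ l := by
        rw [one_mul, Real.dist_eq]
        rw [abs_sub_le_iff]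
        constructor <;> [skip; skip] <;> · obtain ⟨a1, a2⟩ := ma; obtain ⟨b1, b2⟩ := mb; linarith

theorem chord_pos (hl : 0 < l) (hper : Function.Periodic γ l)
    (hinj : Set.InjOn γ (Set.Ico 0 l)) {y : EuclideanSpace ℝ (Fin N)} (hy : y ∈ Ds N l h0)
    {p : Fin N × Fin N} (hp : p ∈ pairsP N) : 0 < ‖γ (y p.1) - γ (y p.2)‖ :=
  norm_pos_iff.mpr (gamma_ne_of_mem_Ds hl hper hinj hy hp)

/-- lower bound of `Vf` in terms of a single chord -/
theorem Vf_ge_single (hl : 0 < l) (hγ : ContDiff ℝ 3 γ) (hper : Function.Periodic γ l)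
    (hinj : Set.InjOn γ (Set.Ico 0 l)) (hunit : ∀ t, ‖deriv γ t‖ = 1)
    {y : EuclideanSpace ℝ (Fin N)} (hy : y ∈ Ds N l h0)
    {p : Fin N × Fin N} (hp : p ∈ pairsP N) :
    -Real.log ‖γ (y p.1) - γ (y p.2)‖ - (pairsP N).card * Real.log (max l 1) ≤ Vf N γ y := by
  have hterm : ∀ q ∈ pairsP N, -Real.log (max l 1) ≤ -Real.log ‖γ (y q.1) - γ (y q.2)‖ := by
    intro q hq
    have h1 : ‖γ (y q.1) - γ (y q.2)‖ ≤ max l 1 :=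
      le_trans (chord_le_l hl hγ hper hunit _ _) (le_max_left _ _)
    exact neg_le_neg (Real.log_le_log (chord_pos hl hper hinj hy hq) h1)
  have hVsum : Vf N γ y = ∑ q ∈ pairsP N, -Real.log ‖γ (y q.1) - γ (y q.2)‖ := by
    rw [Vf_eq, ← Finset.sum_neg_distrib]
  rw [hVsum, ← Finset.add_sum_erase _ _ hp]
  have hrest : ((pairsP N).erase p).card • (-Real.log (max l 1)) ≤
      ∑ q ∈ (pairsP N).erase p, -Real.log ‖γ (y q.1) - γ (y q.2)‖ :=
    Finset.card_nsmul_le_sum _ _ _ (fun q hq => hterm q (Finset.mem_of_mem_erase hq))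
  have hlog1 : 0 ≤ Real.log (max l 1) := Real.log_nonneg (le_max_right _ _)
  have hcard : (((pairsP N).erase p).card : ℝ) ≤ (pairsP N).card := by
    exact_mod_cast Finset.card_le_card (Finset.erase_subset _ _)
  rw [nsmul_eq_mul] at hrest
  nlinarith [hrest]

theorem Vf_lb (hl : 0 < l) (hγ : ContDiff ℝ 3 γ) (hper : Function.Periodic γ l)
    (hinj : Set.InjOn γ (Set.Ico 0 l)) (hunit : ∀ t, ‖deriv γ t‖ = 1)
    {y : EuclideanSpace ℝ (Fin N)} (hy : y ∈ Ds N l h0) :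
    -((pairsP N).card * Real.log (max l 1)) - Real.log (max l 1) ≤ Vf N γ y := by
  rcases (pairsP N).eq_empty_or_nonempty with he | ⟨p, hp⟩
  · rw [Vf_eq, he]
    simp only [Finset.sum_empty, neg_zero, he, Finset.card_empty, Nat.cast_zero, zero_mul,
      neg_zero, zero_sub, neg_nonpos]
    exact Real.log_nonneg (le_max_right _ _)
  · have := Vf_ge_single hl hγ hper hinj hunit hy hp
    have h2 : -Real.log (max l 1) ≤ -Real.log ‖γ (y p.1) - γ (y p.2)‖ :=
      neg_le_neg (Real.log_le_log (chord_pos hl hper hinj hy hp)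
        (le_trans (chord_le_l hl hγ hper hunit _ _) (le_max_left _ _)))
    linarith



theorem Vf_continuousAt (hl : 0 < l) (hγ : ContDiff ℝ 3 γ) (hper : Function.Periodic γ l)
    (hinj : Set.InjOn γ (Set.Ico 0 l)) {y : EuclideanSpace ℝ (Fin N)} (hy : y ∈ Ds N l h0) :
    ContinuousAt (Vf N γ) y :=
  (Vf_contDiffAt hl hγ hper hinj hy).continuousAt

/-- boundary points of `Ds` inside the weak closure have a vanishing chord -/
theorem boundary_chord (hl : 0 < l) (hper : Function.Periodic γ l)
    {y : EuclideanSpace ℝ (Fin N)}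
    (hw : (∀ i j : Fin N, i < j → y i ≤ y j) ∧ ∀ i : Fin N, y i ≤ y ⟨0, h0⟩ + l)
    (hy : y ∉ Ds N l h0) : ∃ p ∈ pairsP N, γ (y p.1) - γ (y p.2) = 0 := by
  obtain ⟨hw1, hw2⟩ := hw
  rw [Ds, Set.mem_setOf_eq, not_and_or] at hy
  rcases hy with hy | hy
  · push_neg at hy
    obtain ⟨i, j, hij, hji⟩ := hy
    refine ⟨(i, j), by simp [pairsP, hij], ?_⟩
    have : y i = y j := le_antisymm (hw1 _ _ hij) hji
    rw [this, sub_self]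
  · push_neg at hy
    obtain ⟨i, hi⟩ := hy
    have heq : y i = y ⟨0, h0⟩ + l := le_antisymm (hw2 i) hi
    have hne : (⟨0, h0⟩ : Fin N) < i := by
      rcases Nat.eq_zero_or_pos i.val with h | h
      · exfalso
        have : i = ⟨0, h0⟩ := Fin.ext h
        rw [this] at heq; linarith
      · exact Fin.mk_lt_of_lt_val h
    refine ⟨(⟨0, h0⟩, i), by simp [pairsP, hne], ?_⟩
    rw [heq, hper (y ⟨0, h0⟩), sub_self]

theorem weakD_closed : IsClosed {y : EuclideanSpace ℝ (Fin N) |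
    (∀ i j : Fin N, i < j → y i ≤ y j) ∧ ∀ i : Fin N, y i ≤ y ⟨0, h0⟩ + l} := by
  have h1 : IsClosed {x : EuclideanSpace ℝ (Fin N) | ∀ i j : Fin N, i < j → x i ≤ x j} := by
    have : {x : EuclideanSpace ℝ (Fin N) | ∀ i j : Fin N, i < j → x i ≤ x j} =
        ⋂ (i : Fin N), ⋂ (j : Fin N), ⋂ (_ : i < j), {x | x i ≤ x j} := by
      ext x; simp [Set.mem_iInter]
    rw [this]
    exact isClosed_iInter fun i => isClosed_iInter fun j => isClosed_iInter fun _ =>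
      isClosed_le (EuclideanSpace.proj i).continuous (EuclideanSpace.proj j).continuous
  have h2 : IsClosed {x : EuclideanSpace ℝ (Fin N) | ∀ i : Fin N, x i ≤ x ⟨0, h0⟩ + l} := by
    have : {x : EuclideanSpace ℝ (Fin N) | ∀ i : Fin N, x i ≤ x ⟨0, h0⟩ + l} =
        ⋂ (i : Fin N), {x | x i ≤ x ⟨0, h0⟩ + l} := by ext x; simp [Set.mem_iInter]
    rw [this]
    exact isClosed_iInter fun i => isClosed_le (EuclideanSpace.proj i).continuous
      (((EuclideanSpace.proj (⟨0, h0⟩ : Fin N)).continuous).add continuous_const)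
  exact h1.inter h2

/-- sublevel sets of `Vf` in `Ds` are closed in the ambient space -/
theorem sublevel_closed (hl : 0 < l) (hγ : ContDiff ℝ 3 γ) (hper : Function.Periodic γ l)
    (hinj : Set.InjOn γ (Set.Ico 0 l)) (hunit : ∀ t, ‖deriv γ t‖ = 1) (c : ℝ) :
    IsClosed {y : EuclideanSpace ℝ (Fin N) | y ∈ Ds N l h0 ∧ Vf N γ y ≤ c} := by
  rw [← isOpen_compl_iff, isOpen_iff_mem_nhds]
  intro y hy
  rw [Set.mem_compl_iff, Set.mem_setOf_eq, not_and_or] at hy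
  set wD := {y : EuclideanSpace ℝ (Fin N) |
    (∀ i j : Fin N, i < j → y i ≤ y j) ∧ ∀ i : Fin N, y i ≤ y ⟨0, h0⟩ + l} with hwD
  by_cases hyD : y ∈ Ds N l h0
  · have hVy : c < Vf N γ y := by
      rcases hy with hy | hy
      · exact absurd hyD hy
      · exact lt_of_not_ge hy
    have : ∀ᶠ z in nhds y, c < Vf N γ z :=
      (Vf_continuousAt hl hγ hper hinj hyD).eventually_const_lt hVy
    filter_upwards [this] with z hz
    rw [Set.mem_compl_iff, Set.mem_setOf_eq, not_and_or]
    right; exact not_le_of_gt hz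
  · by_cases hyw : y ∈ wD
    · -- boundary case: some chord vanishes
      obtain ⟨p, hp, hchord⟩ := boundary_chord hl hper hyw hyD
      set M : ℝ := (pairsP N).card * Real.log (max l 1) with hM
      set ε : ℝ := Real.exp (-(c + M)) with hε
      have hch : Continuous fun z : EuclideanSpace ℝ (Fin N) => ‖γ (z p.1) - γ (z p.2)‖ := by
        have hc1 : Continuous fun z : EuclideanSpace ℝ (Fin N) => γ (z p.1) :=
          hγ.continuous.comp (EuclideanSpace.proj p.1).continuous
        have hc2 : Continuous fun z : EuclideanSpace ℝ (Fin N) => γ (z p.2) :=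
          hγ.continuous.comp (EuclideanSpace.proj p.2).continuous
        exact (hc1.sub hc2).norm
      have hev : ∀ᶠ z in nhds y, ‖γ (z p.1) - γ (z p.2)‖ < ε := by
        have : ‖γ (y p.1) - γ (y p.2)‖ < ε := by
          rw [hchord, norm_zero]; positivity
        exact hch.continuousAt.eventually_lt_const this
      filter_upwards [hev] with z hz
      rw [Set.mem_compl_iff, Set.mem_setOf_eq, not_and_or]
      by_cases hzD : z ∈ Ds N l h0
      · right
        intro hVz
        have hlow := Vf_ge_single hl hγ hper hinj hunit hzD hp
        have hlog : Real.log ‖γ (z p.1) - γ (z p.2)‖ < Real.log ε :=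
          Real.log_lt_log (chord_pos hl hper hinj hzD hp) hz
        rw [hε, Real.log_exp] at hlog
        rw [← hM] at hlow
        linarith
      · left; exact hzD
    · have : ∀ᶠ z in nhds y, z ∈ wDᶜ := weakD_closed.isOpen_compl.eventually_mem hyw
      filter_upwards [this] with z hz
      rw [Set.mem_compl_iff, Set.mem_setOf_eq, not_and_or]
      left
      intro hzD
      exact hz ⟨fun i j hij => le_of_lt (hzD.1 i j hij), fun i => le_of_lt (hzD.2 i)⟩



theorem Vf_contDiffOn (hl : 0 < l) (hγ : ContDiff ℝ 3 γ) (hper : Function.Periodic γ l)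
    (hinj : Set.InjOn γ (Set.Ico 0 l)) : ContDiffOn ℝ 2 (Vf N γ) (Ds N l h0) :=
  fun _ hy => (Vf_contDiffAt hl hγ hper hinj hy).contDiffWithinAt

theorem grad_contDiffOn (hl : 0 < l) (hγ : ContDiff ℝ 3 γ) (hper : Function.Periodic γ l)
    (hinj : Set.InjOn γ (Set.Ico 0 l)) :
    ContDiffOn ℝ 1 (fun y => gradient (Vf N γ) y) (Ds N l h0) := by
  have hfd : ContDiffOn ℝ 1 (fderiv ℝ (Vf N γ)) (Ds N l h0) :=
    (Vf_contDiffOn hl hγ hper hinj).fderiv_of_isOpen Ds_isOpen (by norm_num)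
  have hiso := (InnerProductSpace.toDual ℝ (EuclideanSpace ℝ (Fin N))).symm.contDiff (n := 1)
  exact hiso.comp_contDiffOn hfd

theorem grad_continuousOn (hl : 0 < l) (hγ : ContDiff ℝ 3 γ) (hper : Function.Periodic γ l)
    (hinj : Set.InjOn γ (Set.Ico 0 l)) :
    ContinuousOn (fun y => gradient (Vf N γ) y) (Ds N l h0) :=
  (grad_contDiffOn hl hγ hper hinj).continuousOn

theorem hasDerivAt_Vf_comp (hl : 0 < l) (hγ : ContDiff ℝ 3 γ) (hper : Function.Periodic γ l)
    (hinj : Set.InjOn γ (Set.Ico 0 l)) {α : ℝ → EuclideanSpace ℝ (Fin N)} {t : ℝ}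
    {v : EuclideanSpace ℝ (Fin N)} (hα : HasDerivAt α v t) (hmem : α t ∈ Ds N l h0) :
    HasDerivAt (fun s => Vf N γ (α s))
      (inner ℝ (gradient (Vf N γ) (α t)) v : ℝ) t := by
  have hd : DifferentiableAt ℝ (Vf N γ) (α t) :=
    (Vf_contDiffAt hl hγ hper hinj hmem).differentiableAt (by norm_num)
  have hf := hd.hasGradientAt.hasFDerivAt
  have := hf.comp_hasDerivAt t hα
  simpa [InnerProductSpace.toDual_apply_apply, Function.comp_def] using this



/-- Lipschitz bounded cutoff of the gradient field around a compact subset of `Ds` -/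
theorem cutoff_field (hl : 0 < l) (hγ : ContDiff ℝ 3 γ) (hper : Function.Periodic γ l)
    (hinj : Set.InjOn γ (Set.Ico 0 l)) {K : Set (EuclideanSpace ℝ (Fin N))}
    (hK : IsCompact K) (hKD : K ⊆ Ds N l h0) :
    ∃ (w : EuclideanSpace ℝ (Fin N) → EuclideanSpace ℝ (Fin N)) (L : NNReal) (C : ℝ)
      (U : Set (EuclideanSpace ℝ (Fin N))),
      LipschitzWith L w ∧ (∀ y, ‖w y‖ ≤ C) ∧ IsOpen U ∧ K ⊆ U ∧ U ⊆ Ds N l h0 ∧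
      ∀ y ∈ U, w y = -(gradient (Vf N γ) y) := by
  obtain ⟨δ, hδpos, hδ⟩ := hK.exists_cthickening_subset_open Ds_isOpen hKD
  set s : Set (EuclideanSpace ℝ (Fin N)) := (thickening δ K)ᶜ with hs_def
  set t : Set (EuclideanSpace ℝ (Fin N)) := cthickening (δ/2) K with ht_def
  have hs : IsClosed s := isOpen_thickening.isClosed_compl
  have ht : IsClosed t := isClosed_cthickening
  have htsub : t ⊆ thickening δ K :=
    cthickening_subset_thickening' hδpos (by linarith) K
  have hd : Disjoint s t := Set.disjoint_left.mpr fun y hy1 hy2 => hy1 (htsub hy2)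
  obtain ⟨φ, hφ0, hφ1, hφ01⟩ :=
    exists_contMDiffMap_zero_one_of_isClosed (n := (⊤ : ℕ∞)) 𝓘(ℝ, EuclideanSpace ℝ (Fin N)) hs ht hd
  have hφsm : ContDiff ℝ 1 ⇑φ := (contMDiff_iff_contDiff.mp φ.contMDiff).of_le (mod_cast le_top)
  set G : EuclideanSpace ℝ (Fin N) → EuclideanSpace ℝ (Fin N) :=
    (Ds N l h0).indicator (fun y => -(gradient (Vf N γ) y)) with hG_def
  set w : EuclideanSpace ℝ (Fin N) → EuclideanSpace ℝ (Fin N) := fun y => φ y • G y with hw_def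
  have hsupp : tsupport ⇑φ ⊆ cthickening δ K := by
    apply isClosed_cthickening.closure_subset_iff.mpr
    intro y hy
    by_contra hyn
    exact hy (hφ0 (by simpa [hs_def] using fun h => hyn (thickening_subset_cthickening δ K h)))
  have hw0 : ∀ y ∉ tsupport ⇑φ, w y = 0 := by
    intro y hy
    exact smul_eq_zero_of_left (image_eq_zero_of_notMem_tsupport hy) _
  have hcd : ContDiff ℝ 1 w := by
    rw [contDiff_iff_contDiffAt]
    intro y
    by_cases hyD : y ∈ Ds N l h0
    · have hev : ∀ᶠ z in nhds y, w z = φ z • (-(gradient (Vf N γ) z)) := by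
        filter_upwards [Ds_isOpen.mem_nhds hyD] with z hz
        simp [hw_def, hG_def, Set.indicator_of_mem hz]
      have h1 : ContDiffAt ℝ 1 (fun z => φ z • (-(gradient (Vf N γ) z))) y :=
        hφsm.contDiffAt.smul (((grad_contDiffOn hl hγ hper hinj).contDiffAt
          (Ds_isOpen.mem_nhds hyD)).neg)
      exact h1.congr_of_eventuallyEq hev
    · have hyn : y ∉ tsupport ⇑φ := fun h => hyD (hδ (hsupp h))
      have hev : ∀ᶠ z in nhds y, w z = 0 := by
        filter_upwards [(isClosed_tsupport ⇑φ).isOpen_compl.mem_nhds hyn] with z hz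
        exact hw0 z hz
      exact contDiffAt_const.congr_of_eventuallyEq hev
  have hwsupp : HasCompactSupport w := by
    apply HasCompactSupport.of_support_subset_isCompact
      (hK.cthickening.of_isClosed_subset (isClosed_tsupport _) hsupp)
    intro y hy
    by_contra hyn
    exact hy (hw0 y hyn)
  obtain ⟨L, hL⟩ := hcd.lipschitzWith_of_hasCompactSupport hwsupp one_ne_zero
  obtain ⟨C, hC⟩ := hwsupp.exists_bound_of_continuous hcd.continuous
  refine ⟨w, L, C, thickening (δ/2) K, hL, hC, isOpen_thickening,
    self_subset_thickening (by linarith) K, ?_, ?_⟩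
  · exact fun y hy => hδ (cthickening_mono (by linarith) K (thickening_subset_cthickening _ K hy))
  · intro y hy
    have hyD : y ∈ Ds N l h0 := hδ (cthickening_mono (by linarith) K
      (thickening_subset_cthickening _ K hy))
    have : φ y = 1 := hφ1 (thickening_subset_cthickening _ K hy)
    simp [hw_def, hG_def, Set.indicator_of_mem hyD, this]


/-- local-in-time existence of the gradient flow, staying in the sublevel set,
with quantitative displacement bound -/
theorem flow_exists (hl : 0 < l) (hγ : ContDiff ℝ 3 γ) (hper : Function.Periodic γ l)
    (hinj : Set.InjOn γ (Set.Ico 0 l)) (hunit : ∀ t, ‖deriv γ t‖ = 1)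
    {y₀ : EuclideanSpace ℝ (Fin N)} (hy₀ : y₀ ∈ Ds N l h0) (T S : ℝ) (hS : 0 < S) :
    ∃ α : ℝ → EuclideanSpace ℝ (Fin N), α T = y₀ ∧ ∀ t ∈ Set.Icc T (T+S),
      (α t ∈ Ds N l h0 ∧ Vf N γ (α t) ≤ Vf N γ y₀ ∧
        ‖α t - y₀‖ ≤ ((t - T) + (Vf N γ y₀ + ((pairsP N).card * Real.log (max l 1)
          + Real.log (max l 1))))/2) ∧
      HasDerivWithinAt α (-(gradient (Vf N γ) (α t))) (Set.Icc T (T+S)) t := by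
  set c₀ := Vf N γ y₀ with hc₀
  set BB : ℝ := c₀ + ((pairsP N).card * Real.log (max l 1) + Real.log (max l 1)) with hBB
  have hBB0 : 0 ≤ BB := by
    have := Vf_lb hl hγ hper hinj hunit hy₀
    rw [hBB, hc₀]; linarith
  set R₁ : ℝ := (S + BB)/2 with hR₁
  have hR₁0 : 0 ≤ R₁ := by rw [hR₁]; positivity
  set Kinv : Set (EuclideanSpace ℝ (Fin N)) :=
    {y | y ∈ Ds N l h0 ∧ Vf N γ y ≤ c₀} ∩ closedBall y₀ R₁ with hKinv
  have hKclosed : IsClosed Kinv :=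
    (sublevel_closed hl hγ hper hinj hunit c₀).inter isClosed_closedBall
  have hKcompact : IsCompact Kinv :=
    isCompact_of_isClosed_isBounded hKclosed (isBounded_closedBall.subset Set.inter_subset_right)
  have hKD : Kinv ⊆ Ds N l h0 := fun y hy => hy.1.1
  obtain ⟨w, L, C, U, hLip, hCb, hUopen, hKU, hUD, hwU⟩ := cutoff_field hl hγ hper hinj hKcompact hKD
  have hC0 : 0 ≤ C := le_trans (norm_nonneg _) (hCb 0)
  -- Picard–Lindelöf
  have hPL : IsPicardLindelof (fun _ y => w y) (tmin := T) (tmax := T+S) ⟨T, le_rfl, by linarith⟩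
      y₀ (C*S + 1).toNNReal 0 C.toNNReal L :=
    { lipschitzOnWith := fun t _ => LipschitzWith.lipschitzOnWith hLip
      continuousOn := fun y _ => continuousOn_const
      norm_le := fun t _ y _ => (hCb y).trans (Real.le_coe_toNNReal C)
      mul_max_le := by
        simp only [Real.coe_toNNReal _ hC0, Real.coe_toNNReal _
          (show 0 ≤ C*S+1 by nlinarith [mul_nonneg hC0 hS.le]), NNReal.coe_zero, sub_zero,
          add_sub_cancel_left, sub_self, max_eq_left hS.le]
        linarith }
  obtain ⟨α, hα0', hαD⟩ := hPL.exists_eq_forall_mem_Icc_hasDerivWithinAt₀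
  have hα0 : α T = y₀ := hα0'
  have hαcont : ContinuousOn α (Set.Icc T (T+S)) := fun t ht => (hαD t ht).continuousWithinAt
  have hVfcont : ContinuousOn (Vf N γ) (Ds N l h0) :=
    fun y hy => (Vf_contDiffAt hl hγ hper hinj hy).continuousAt.continuousWithinAt
  -- the energy estimate
  have energy : ∀ b ∈ Set.Icc T (T+S), (∀ u ∈ Set.Icc T b, α u ∈ U) →
      ∀ s ∈ Set.Icc T b, Vf N γ (α s) ≤ c₀ ∧ ‖α s - y₀‖ ≤ ((s - T) + BB)/2 := by
    intro b hb hU s hs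
    have hsS : s ≤ T + S := hs.2.trans hb.2
    have hsub : Set.Icc T s ⊆ Set.Icc T b := Set.Icc_subset_Icc le_rfl hs.2
    have hmem : ∀ u ∈ Set.Icc T s, α u ∈ Ds N l h0 := fun u hu => hUD (hU u (hsub hu))
    have hderiv_at : ∀ u ∈ Set.Ioo T s, HasDerivAt α (-(gradient (Vf N γ) (α u))) u := by
      intro u hu
      have h1 := hαD u ⟨hu.1.le, (hu.2.trans_le hsS).le⟩
      rw [hwU _ (hU u (hsub ⟨hu.1.le, hu.2.le⟩))] at h1
      exact h1.hasDerivAt (Icc_mem_nhds hu.1 (hu.2.trans_le hsS))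
    have hcont_ab : ContinuousOn α (Set.Icc T s) :=
      hαcont.mono (Set.Icc_subset_Icc le_rfl hsS)
    have hgradcont : ContinuousOn (fun u => gradient (Vf N γ) (α u)) (Set.Icc T s) :=
      (grad_continuousOn hl hγ hper hinj).comp hcont_ab hmem
    have hftc : ∫ u in T..s, -(gradient (Vf N γ) (α u)) = α s - α T := by
      apply intervalIntegral.integral_eq_sub_of_hasDeriv_right_of_le hs.1 hcont_ab
        (fun u hu => (hderiv_at u hu).hasDerivWithinAt)
      exact (hgradcont.neg).intervalIntegrable_of_Icc hs.1
    have hVder : ∀ u ∈ Set.Ioo T s,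
        HasDerivAt (fun r => Vf N γ (α r)) (-(‖gradient (Vf N γ) (α u)‖^2)) u := by
      intro u hu
      have h := hasDerivAt_Vf_comp hl hγ hper hinj (hderiv_at u hu) (hmem u ⟨hu.1.le, hu.2.le⟩)
      have hinner : (inner ℝ (gradient (Vf N γ) (α u)) (-(gradient (Vf N γ) (α u))) : ℝ)
          = -(‖gradient (Vf N γ) (α u)‖^2) := by
        rw [inner_neg_right, real_inner_self_eq_norm_sq]
      rwa [hinner] at h
    have hVcont : ContinuousOn (fun r => Vf N γ (α r)) (Set.Icc T s) :=
      hVfcont.comp hcont_ab hmem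
    have hnormint : IntervalIntegrable (fun u => ‖gradient (Vf N γ) (α u)‖^2) volume T s :=
      ((hgradcont.norm.pow 2)).intervalIntegrable_of_Icc hs.1
    have hftcV : ∫ u in T..s, -(‖gradient (Vf N γ) (α u)‖^2) = Vf N γ (α s) - Vf N γ (α T) := by
      apply intervalIntegral.integral_eq_sub_of_hasDeriv_right_of_le hs.1 hVcont
        (fun u hu => (hVder u hu).hasDerivWithinAt)
      exact hnormint.neg
    rw [intervalIntegral.integral_neg] at hftcV
    have hint_nonneg : 0 ≤ ∫ u in T..s, ‖gradient (Vf N γ) (α u)‖^2 :=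
      intervalIntegral.integral_nonneg hs.1 (fun u _ => by positivity)
    have hVs : Vf N γ (α s) ≤ c₀ := by rw [hα0] at hftcV; rw [hc₀]; linarith
    refine ⟨hVs, ?_⟩
    have hintV : (∫ u in T..s, ‖gradient (Vf N γ) (α u)‖^2) ≤ BB := by
      have hlb := Vf_lb hl hγ hper hinj hunit (hmem s (Set.right_mem_Icc.mpr hs.1))
      rw [hα0] at hftcV
      rw [hBB, hc₀]; linarith
    have h1 : ‖α s - y₀‖ ≤ ∫ u in T..s, ‖gradient (Vf N γ) (α u)‖ := by
      rw [← hα0, ← hftc]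
      refine le_trans (intervalIntegral.norm_integral_le_integral_norm hs.1) ?_
      simp
    have hnint : IntervalIntegrable (fun u => ‖gradient (Vf N γ) (α u)‖) volume T s :=
      hgradcont.norm.intervalIntegrable_of_Icc hs.1
    have h2 : (∫ u in T..s, ‖gradient (Vf N γ) (α u)‖) ≤
        ∫ u in T..s, (1 + ‖gradient (Vf N γ) (α u)‖^2)/2 := by
      apply intervalIntegral.integral_mono_on hs.1 hnint
      · exact (intervalIntegrable_const.add hnormint).div_const 2
      · intro u _
        nlinarith [sq_nonneg (‖gradient (Vf N γ) (α u)‖ - 1)]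
    have h3 : (∫ u in T..s, (1 + ‖gradient (Vf N γ) (α u)‖^2)/2) =
        ((s - T) + ∫ u in T..s, ‖gradient (Vf N γ) (α u)‖^2)/2 := by
      rw [intervalIntegral.integral_div, intervalIntegral.integral_add
        intervalIntegrable_const hnormint, intervalIntegral.integral_const]
      simp [smul_eq_mul]
    rw [h3] at h2
    linarith
  -- the invariance argument
  set Gs : Set ℝ := {t | t ∈ Set.Icc T (T+S) ∧ Set.MapsTo α (Set.Icc T t) Kinv} with hGs
  have hy₀K : y₀ ∈ Kinv := ⟨⟨hy₀, le_rfl⟩, mem_closedBall_self hR₁0⟩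
  have hTG : T ∈ Gs := by
    refine ⟨⟨le_rfl, by linarith⟩, fun u hu => ?_⟩
    have : u = T := le_antisymm hu.2 hu.1
    rw [this, hα0]; exact hy₀K
  have hGbdd : BddAbove Gs := ⟨T+S, fun t ht => ht.1.2⟩
  set t₁ := sSup Gs with ht₁
  have ht₁mem : t₁ ∈ Set.Icc T (T+S) :=
    ⟨le_csSup hGbdd hTG, csSup_le ⟨T, hTG⟩ (fun t ht => ht.1.2)⟩
  have hin : ∀ u, T ≤ u → u < t₁ → α u ∈ Kinv := by
    intro u h1 h2
    obtain ⟨t, htG, hlt⟩ := exists_lt_of_lt_csSup ⟨T, hTG⟩ h2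
    exact htG.2 ⟨h1, hlt.le⟩
  have ht₁K : α t₁ ∈ Kinv := by
    rcases eq_or_lt_of_le ht₁mem.1 with h | h
    · rw [← h, hα0]; exact hy₀K
    · have hcw : ContinuousWithinAt α (Set.Ico T t₁) t₁ :=
        (hαcont t₁ ht₁mem).mono (fun u hu => ⟨hu.1, hu.2.le.trans ht₁mem.2⟩)
      have hmem_cl : t₁ ∈ closure (Set.Ico T t₁) := by
        rw [closure_Ico h.ne]; exact Set.right_mem_Icc.mpr h.le
      have himg : α '' Set.Ico T t₁ ⊆ Kinv := by
        rintro _ ⟨u, hu, rfl⟩; exact hin u hu.1 hu.2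
      have := hcw.mem_closure_image hmem_cl
      exact hKclosed.closure_subset_iff.mpr himg this
  have ht₁G : t₁ ∈ Gs := by
    refine ⟨ht₁mem, fun u hu => ?_⟩
    rcases eq_or_lt_of_le hu.2 with he | hlt
    · rw [he]; exact ht₁K
    · exact hin u hu.1 hlt
  have ht₁eq : t₁ = T + S := by
    by_contra hne
    have hlt : t₁ < T + S := lt_of_le_of_ne ht₁mem.2 hne
    have hcw : ContinuousWithinAt α (Set.Icc T (T+S)) t₁ := hαcont t₁ ht₁mem
    have hev : {u | α u ∈ U} ∈ nhdsWithin t₁ (Set.Icc T (T+S)) :=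
      hcw (hUopen.mem_nhds (hKU ht₁K))
    rw [mem_nhdsWithin] at hev
    obtain ⟨O, hOopen, hOmem, hOsub⟩ := hev
    obtain ⟨ε, hεpos, hεball⟩ := Metric.isOpen_iff.mp hOopen t₁ hOmem
    set t₂ := min (t₁ + ε/2) (T+S) with ht₂
    have ht₂gt : t₁ < t₂ := lt_min (by linarith) hlt
    have ht₂mem : t₂ ∈ Set.Icc T (T+S) :=
      ⟨le_trans ht₁mem.1 ht₂gt.le, min_le_right _ _⟩
    have hallU : ∀ u ∈ Set.Icc T t₂, α u ∈ U := by
      intro u hu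
      by_cases hu1 : u ≤ t₁
      · exact hKU (ht₁G.2 ⟨hu.1, hu1⟩)
      · push_neg at hu1
        apply hOsub
        refine ⟨hεball ?_, ⟨hu.1, hu.2.trans ht₂mem.2⟩⟩
        rw [mem_ball, Real.dist_eq, abs_lt]
        have : u ≤ t₁ + ε/2 := hu.2.trans (min_le_left _ _)
        constructor <;> linarith
    have ht₂G : t₂ ∈ Gs := by
      refine ⟨ht₂mem, fun u hu => ?_⟩
      have hres := energy t₂ ht₂mem hallU u hu
      refine ⟨⟨hUD (hallU u hu), hres.1⟩, ?_⟩
      rw [mem_closedBall, dist_eq_norm]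
      have hu2 : u - T ≤ S := by
        have := hu.2.trans ht₂mem.2; linarith
      have := hres.2
      rw [hR₁]; linarith
    have := le_csSup hGbdd ht₂G
    exact absurd this (not_le.mpr ht₂gt)
  -- conclusion
  have hall : ∀ u ∈ Set.Icc T (T+S), α u ∈ Kinv := fun u hu => ht₁G.2 (by rwa [ht₁eq])
  have hallU : ∀ u ∈ Set.Icc T (T+S), α u ∈ U := fun u hu => hKU (hall u hu)
  refine ⟨α, hα0, fun t ht => ?_⟩
  have hen := energy (T+S) (Set.right_mem_Icc.mpr (by linarith)) hallU t ht
  refine ⟨⟨hUD (hallU t ht), hen.1, hen.2⟩, ?_⟩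
  have := hαD t ht
  rwa [hwU _ (hallU t ht)] at this


/-- uniqueness of the gradient flow among solutions staying in a common compact set -/
theorem flow_unique (hl : 0 < l) (hγ : ContDiff ℝ 3 γ) (hper : Function.Periodic γ l)
    (hinj : Set.InjOn γ (Set.Ico 0 l)) {T b : ℝ} (hTb : T ≤ b)
    {K : Set (EuclideanSpace ℝ (Fin N))} (hK : IsCompact K) (hKD : K ⊆ Ds N l h0)
    {α β : ℝ → EuclideanSpace ℝ (Fin N)}
    (hαc : ContinuousOn α (Set.Icc T b)) (hβc : ContinuousOn β (Set.Icc T b))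
    (hαd : ∀ t ∈ Set.Icc T b, HasDerivWithinAt α (-(gradient (Vf N γ) (α t))) (Set.Icc T b) t)
    (hβd : ∀ t ∈ Set.Icc T b, HasDerivWithinAt β (-(gradient (Vf N γ) (β t))) (Set.Icc T b) t)
    (hαK : ∀ t ∈ Set.Icc T b, α t ∈ K) (hβK : ∀ t ∈ Set.Icc T b, β t ∈ K)
    (h00 : α T = β T) : Set.EqOn α β (Set.Icc T b) := by
  obtain ⟨w, L, C, U, hLip, hCb, hUopen, hKU, hUD, hwU⟩ := cutoff_field hl hγ hper hinj hK hKD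
  have key : ∀ (δ : ℝ → EuclideanSpace ℝ (Fin N)),
      (∀ t ∈ Set.Icc T b, HasDerivWithinAt δ (-(gradient (Vf N γ) (δ t))) (Set.Icc T b) t) →
      (∀ t ∈ Set.Icc T b, δ t ∈ K) →
      ∀ t ∈ Set.Ico T b, HasDerivWithinAt δ (w (δ t)) (Set.Ici t) t := by
    intro δ hδd hδK t ht
    have hmem : Set.Icc T b ∈ nhdsWithin t (Set.Ici t) := by
      rw [mem_nhdsWithin]
      exact ⟨Set.Iio b, isOpen_Iio, ht.2, fun u hu => ⟨le_trans ht.1 hu.2, hu.1.le⟩⟩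
    have := (hδd t ⟨ht.1, ht.2.le⟩).mono_of_mem_nhdsWithin hmem
    rwa [← hwU _ (hKU (hδK t ⟨ht.1, ht.2.le⟩))] at this
  exact ODE_solution_unique_of_mem_Icc_right
    (fun _ _ => hLip.lipschitzOnWith) hαc (key α hαd hαK) (fun t _ => Set.mem_univ (α t))
    hβc (key β hβd hβK) (fun t _ => Set.mem_univ (β t)) h00

/-- global existence of the gradient flow on `[T, ∞)` -/
theorem flow_global (hl : 0 < l) (hγ : ContDiff ℝ 3 γ) (hper : Function.Periodic γ l)
    (hinj : Set.InjOn γ (Set.Ico 0 l)) (hunit : ∀ t, ‖deriv γ t‖ = 1)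
    {y₀ : EuclideanSpace ℝ (Fin N)} (hy₀ : y₀ ∈ Ds N l h0) (T : ℝ) :
    ∃ α : ℝ → EuclideanSpace ℝ (Fin N), α T = y₀ ∧
      (∀ t ∈ Set.Ici T, α t ∈ Ds N l h0) ∧
      (∀ t ∈ Set.Ici T, HasDerivWithinAt α (-(gradient (Vf N γ) (α t))) (Set.Ici T) t) := by
  set BB : ℝ := Vf N γ y₀ + ((pairsP N).card * Real.log (max l 1) + Real.log (max l 1)) with hBB
  -- a flow on [T, T+n+1] for every n
  have hex : ∀ n : ℕ, ∃ α : ℝ → EuclideanSpace ℝ (Fin N), α T = y₀ ∧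
      ∀ t ∈ Set.Icc T (T + (n+1 : ℝ)),
        (α t ∈ Ds N l h0 ∧ Vf N γ (α t) ≤ Vf N γ y₀ ∧ ‖α t - y₀‖ ≤ ((t - T) + BB)/2) ∧
        HasDerivWithinAt α (-(gradient (Vf N γ) (α t))) (Set.Icc T (T + (n+1 : ℝ))) t :=
    fun n => flow_exists hl hγ hper hinj hunit hy₀ T ((n:ℝ)+1) (by positivity)
  choose αs hαs0 hαs using hex
  -- the common compact confinement sets
  set Kc : ℕ → Set (EuclideanSpace ℝ (Fin N)) := fun n =>
    {y | y ∈ Ds N l h0 ∧ Vf N γ y ≤ Vf N γ y₀} ∩ closedBall y₀ (((n:ℝ)+1+BB)/2) with hKc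
  have hKcc : ∀ n, IsCompact (Kc n) := fun n =>
    isCompact_of_isClosed_isBounded
      ((sublevel_closed hl hγ hper hinj hunit _).inter isClosed_closedBall)
      (isBounded_closedBall.subset Set.inter_subset_right)
  have hKcD : ∀ n, Kc n ⊆ Ds N l h0 := fun n y hy => hy.1.1
  have hmemK : ∀ n m : ℕ, m ≤ n → ∀ t ∈ Set.Icc T (T + ((m:ℝ)+1)), αs n t ∈ Kc m := by
    intro n m hmn t ht
    have htn : t ∈ Set.Icc T (T + ((n:ℝ)+1)) := by
      refine ⟨ht.1, ht.2.trans (by push_cast; linarith [(Nat.cast_le (α := ℝ)).mpr hmn])⟩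
    obtain ⟨⟨h1, h2, h3⟩, _⟩ := hαs n t htn
    refine ⟨⟨h1, h2⟩, ?_⟩
    rw [mem_closedBall, dist_eq_norm]
    have : t - T ≤ (m:ℝ)+1 := by linarith [ht.2]
    linarith
  -- consistency
  have hcons : ∀ n m : ℕ, m ≤ n → Set.EqOn (αs m) (αs n) (Set.Icc T (T + ((m:ℝ)+1))) := by
    intro n m hmn
    have hmn' : T + ((m:ℝ)+1) ≤ T + ((n:ℝ)+1) := by
      have : (m:ℝ) ≤ n := Nat.cast_le.mpr hmn
      linarith
    have hsub : Set.Icc T (T + ((m:ℝ)+1)) ⊆ Set.Icc T (T + ((n:ℝ)+1)) :=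
      Set.Icc_subset_Icc le_rfl hmn'
    apply flow_unique hl hγ hper hinj (by linarith [Nat.cast_nonneg (α := ℝ) m] : T ≤ T + ((m:ℝ)+1))
      (hKcc m) (hKcD m)
    · exact fun t ht => ((hαs m t ht).2).continuousWithinAt
    · exact fun t ht => (((hαs n t (hsub ht)).2).mono hsub).continuousWithinAt
    · exact fun t ht => (hαs m t ht).2
    · exact fun t ht => ((hαs n t (hsub ht)).2).mono hsub
    · exact fun t ht => hmemK m m le_rfl t ht
    · exact fun t ht => hmemK n m hmn t ht
    · rw [hαs0, hαs0]
  -- glue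
  set α : ℝ → EuclideanSpace ℝ (Fin N) := fun t => αs ⌊t - T⌋₊ t with hα
  have hαeq : ∀ n : ℕ, ∀ t ∈ Set.Icc T (T + ((n:ℝ)+1)), α t = αs n t := by
    intro n t ht
    set m := ⌊t - T⌋₊ with hm
    have htm : t ∈ Set.Icc T (T + ((m:ℝ)+1)) :=
      ⟨ht.1, by have := Nat.lt_floor_add_one (t - T); linarith [this]⟩
    rcases le_total m n with h | h
    · rw [hα]
      simp only
      rw [← hm, hcons n m h htm]
    · rw [hα]; simp only; rw [← hm, ← hcons m n h ht]
  have hαT : α T = y₀ := by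
    rw [hαeq 0 T ⟨le_rfl, by norm_num⟩, hαs0]
  refine ⟨α, hαT, ?_, ?_⟩
  · intro t ht
    have htm : t ∈ Set.Icc T (T + ((⌊t - T⌋₊:ℝ)+1)) :=
      ⟨ht, by have := Nat.lt_floor_add_one (t - T); linarith⟩
    rw [hαeq ⌊t - T⌋₊ t htm]
    exact ((hαs _ t htm).1).1
  · intro t ht
    set n := ⌊t - T⌋₊ + 1 with hn
    have htlt : t < T + ((n:ℝ)+1) := by
      have := Nat.lt_floor_add_one (t - T)
      rw [hn]; push_cast; linarith
    have htn : t ∈ Set.Icc T (T + ((n:ℝ)+1)) := ⟨ht, htlt.le⟩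
    have hmem : Set.Icc T (T + ((n:ℝ)+1)) ∈ nhdsWithin t (Set.Ici T) := by
      rw [mem_nhdsWithin]
      exact ⟨Set.Iio (T + ((n:ℝ)+1)), isOpen_Iio, htlt, fun u hu => ⟨hu.2, hu.1.le⟩⟩
    have hd := ((hαs n t htn).2).mono_of_mem_nhdsWithin hmem
    have hev : Set.EqOn α (αs n) (Set.Icc T (T + ((n:ℝ)+1))) := fun u hu => hαeq n u hu
    have : HasDerivWithinAt α (-(gradient (Vf N γ) (αs n t))) (Set.Ici T) t := by
      apply hd.congr_of_eventuallyEq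
      · exact Filter.eventuallyEq_of_mem hmem (fun u hu => hev hu)
      · exact hev htn
    rwa [← hαeq n t htn] at this

/-- restriction can only decrease the rate -/
theorem rate_mono {N : ℕ} (V : EuclideanSpace ℝ (Fin N) → ℝ)
    (x : EuclideanSpace ℝ (Fin N)) (T : ℝ) (hT : 0 ≤ T)
    (f F : ℝ → EuclideanSpace ℝ (Fin N)) (hFf : ∀ t ∈ Set.Icc (0:ℝ) T, F t = f t) :
    rateFunctional N V x (Set.Icc 0 T) f ≤ rateFunctional N V x (Set.Ici 0) F := by
  refine le_iInf fun g => le_iInf fun hg => ?_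
  obtain ⟨hgm, hgp⟩ := hg
  have hcond : Measurable g ∧ ∀ t ∈ Set.Icc (0:ℝ) T,
      MeasureTheory.IntegrableOn g (Set.Icc 0 t) (volume : Measure ℝ) ∧
        f t = x + ∫ u in (0:ℝ)..t, g u := by
    refine ⟨hgm, fun t ht => ?_⟩
    obtain ⟨h1, h2⟩ := hgp t ht.1
    exact ⟨h1, by rw [← hFf t ht, h2]⟩
  refine le_trans (iInf₂_le g hcond) ?_
  apply mul_le_mul_right
  have : ∫⁻ u in Set.Icc (0:ℝ) T, ENNReal.ofReal (‖g u + gradient V (f u)‖ ^ 2) =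
      ∫⁻ u in Set.Icc (0:ℝ) T, ENNReal.ofReal (‖g u + gradient V (F u)‖ ^ 2) := by
    apply setLIntegral_congr_fun_ae measurableSet_Icc
    exact Filter.Eventually.of_forall fun u hu => by rw [hFf u hu]
  rw [this]
  exact lintegral_mono_set (fun u hu => hu.1)


end FWAux


/-- The restriction identity for the rate function: for a path `f` on `[0,T]`,
`I_T(f) = inf { I(F) : F ∈ C_x([0,∞), D), F|_{[0,T]} = f }`, and the infimum is
attained by extending `f` beyond time `T` by the gradient flow `u' = −∇V(u)`
started at `f(T)`. -/
theorem rate_functional_projective_identity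
    (l : ℝ) (hl : 0 < l)
    (γ : ℝ → ℂ) (hγ : ContDiff ℝ 3 γ) (hper : Function.Periodic γ l)
    (hinj : Set.InjOn γ (Set.Ico 0 l)) (hunit : ∀ t, ‖deriv γ t‖ = 1)
    (N : ℕ) (hN : 2 ≤ N)
    (D : Set (EuclideanSpace ℝ (Fin N)))
    (hD : D = {x | (∀ i j : Fin N, i < j → x i < x j) ∧
      ∀ i : Fin N, x i < x ⟨0, by omega⟩ + l})
    (V : EuclideanSpace ℝ (Fin N) → ℝ)
    (hV : V = fun x => -∑ p ∈ Finset.univ.filter (fun p : Fin N × Fin N => p.1 < p.2),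
      Real.log ‖γ (x p.1) - γ (x p.2)‖)
    (x : EuclideanSpace ℝ (Fin N)) (hx : x ∈ D)
    (T : ℝ) (hT : 0 < T)
    (f : ℝ → EuclideanSpace ℝ (Fin N))
    (hf : ContinuousOn f (Set.Icc 0 T)) (hf0 : f 0 = x)
    (hfD : ∀ t ∈ Set.Icc 0 T, f t ∈ D) :
    rateFunctional N V x (Set.Icc 0 T) f =
      (⨅ (F : ℝ → EuclideanSpace ℝ (Fin N)) (_ : ContinuousOn F (Set.Ici 0) ∧
          (∀ t ∈ Set.Ici (0:ℝ), F t ∈ D) ∧ ∀ t ∈ Set.Icc 0 T, F t = f t),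
        rateFunctional N V x (Set.Ici 0) F) ∧
    ∃ F : ℝ → EuclideanSpace ℝ (Fin N),
      (ContinuousOn F (Set.Ici 0) ∧ (∀ t ∈ Set.Ici (0:ℝ), F t ∈ D) ∧
        ∀ t ∈ Set.Icc 0 T, F t = f t) ∧
      (∀ t : ℝ, T ≤ t → HasDerivWithinAt F (-(gradient V (F t))) (Set.Ici T) t) ∧
      rateFunctional N V x (Set.Ici 0) F = rateFunctional N V x (Set.Icc 0 T) f := by
  have h0 : 0 < N := by omega
  have hDeq : D = Ds N l h0 := hD
  have hVeq : V = Vf N γ := hV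
  subst hDeq hVeq
  -- the gradient flow started at `f T`
  have hy₀ : f T ∈ Ds N l h0 := hfD T ⟨hT.le, le_rfl⟩
  obtain ⟨αg, hαgT, hαgD, hαgd⟩ := flow_global hl hγ hper hinj hunit hy₀ T
  have hαgcont : ContinuousOn αg (Set.Ici T) := fun t ht => (hαgd t ht).continuousWithinAt
  set F : ℝ → EuclideanSpace ℝ (Fin N) := fun t => if t ≤ T then f t else αg t with hF
  have hFIcc : ∀ t ∈ Set.Icc (0:ℝ) T, F t = f t := fun t ht => if_pos ht.2
  have hFge : ∀ t, T ≤ t → F t = αg t := by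
    intro t ht
    rcases eq_or_lt_of_le ht with h | h
    · rw [← h]; rw [hF]; simp only [if_pos le_rfl]; exact hαgT.symm
    · rw [hF]; simp only [if_neg (not_le.mpr h)]
  have hFcont : ContinuousOn F (Set.Ici 0) := by
    intro t ht
    have hpiece1 : ContinuousWithinAt F (Set.Icc 0 T) t := by
      by_cases h : t ≤ T
      · exact (hf t ⟨ht, h⟩).congr (fun u hu => hFIcc u hu) (hFIcc t ⟨ht, h⟩)
      · apply continuousWithinAt_of_notMem_closure
        rw [closure_Icc]
        exact fun hc => h hc.2
    have hpiece2 : ContinuousWithinAt F (Set.Ici T) t := by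
      by_cases h : T ≤ t
      · exact (hαgcont t h).congr (fun u hu => hFge u hu) (hFge t h)
      · apply continuousWithinAt_of_notMem_closure
        rw [closure_Ici]
        exact h
    have := hpiece1.union hpiece2
    rwa [Set.Icc_union_Ici_eq_Ici hT.le] at this
  have hFD : ∀ t ∈ Set.Ici (0:ℝ), F t ∈ Ds N l h0 := by
    intro t ht
    by_cases h : t ≤ T
    · rw [hFIcc t ⟨ht, h⟩]; exact hfD t ⟨ht, h⟩
    · rw [hFge t (not_le.mp h).le]; exact hαgD t (not_le.mp h).le
  have hFflow : ∀ t : ℝ, T ≤ t →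
      HasDerivWithinAt F (-(gradient (Vf N γ) (F t))) (Set.Ici T) t := by
    intro t ht
    rw [hFge t ht]
    exact (hαgd t ht).congr (fun u hu => hFge u hu) (hFge t ht)
  have hFadm : ContinuousOn F (Set.Ici 0) ∧ (∀ t ∈ Set.Ici (0:ℝ), F t ∈ Ds N l h0) ∧
      ∀ t ∈ Set.Icc (0:ℝ) T, F t = f t := ⟨hFcont, hFD, hFIcc⟩
  -- key inequality: the flow extension has the same rate
  have hC2 : rateFunctional N (Vf N γ) x (Set.Ici 0) F ≤
      rateFunctional N (Vf N γ) x (Set.Icc 0 T) f := by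
    refine le_iInf fun g => le_iInf fun hg => ?_
    obtain ⟨hgm, hgp⟩ := hg
    set tl : ℝ → EuclideanSpace ℝ (Fin N) :=
      fun u => -(gradient (Vf N γ) (αg (max u T))) with htl
    have htl_cont : Continuous tl := by
      have h1 : Continuous fun u : ℝ => αg (max u T) :=
        hαgcont.comp_continuous (continuous_id.max continuous_const)
          (fun u => le_max_right u T)
      exact ((grad_continuousOn hl hγ hper hinj).comp_continuous h1
        (fun u => hαgD _ (le_max_right u T))).neg
    set gg : ℝ → EuclideanSpace ℝ (Fin N) := fun u => if u < T then g u else tl u with hgg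
    have hggm : Measurable gg :=
      Measurable.ite measurableSet_Iio hgm htl_cont.measurable
    have hTne : ∀ᵐ u : ℝ ∂(volume : Measure ℝ), u ≠ T := by
      rw [MeasureTheory.ae_iff]
      simp only [not_not, Set.setOf_eq_eq_singleton]
      exact Real.volume_singleton
    have hgg_eq_ae : ∀ t', t' ≤ T → gg =ᵐ[volume.restrict (Set.Icc 0 t')] g := by
      intro t' h
      filter_upwards [ae_restrict_mem measurableSet_Icc, ae_restrict_of_ae hTne] with u hu hune
      have hult : u < T := lt_of_le_of_ne (hu.2.trans h) hune
      rw [hgg]; simp only [if_pos hult]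
    have hggIccT : ∀ t', IntegrableOn gg (Set.Icc T t') (volume : Measure ℝ) := by
      intro t'
      apply (htl_cont.integrableOn_Icc).congr
      filter_upwards [ae_restrict_mem measurableSet_Icc] with u hu
      rw [hgg]; simp only [if_neg (not_lt.mpr hu.1)]
    have hgg_int : ∀ t ∈ Set.Ici (0:ℝ), IntegrableOn gg (Set.Icc 0 t) (volume : Measure ℝ) := by
      intro t ht
      rcases le_or_gt t T with h | h
      · exact ((hgp t ⟨ht, h⟩).1).congr (hgg_eq_ae t h).symm
      · have h1 : IntegrableOn gg (Set.Icc 0 T) (volume : Measure ℝ) :=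
          ((hgp T ⟨hT.le, le_rfl⟩).1).congr (hgg_eq_ae T le_rfl).symm
        exact (h1.union (hggIccT t)).mono_set (fun u hu => by
          rcases le_or_gt u T with h' | h'
          · exact Set.mem_union_left _ ⟨hu.1, h'⟩
          · exact Set.mem_union_right _ ⟨h'.le, hu.2⟩)
    have hInt_eq_le : ∀ t', 0 ≤ t' → t' ≤ T →
        (∫ u in (0:ℝ)..t', gg u) = ∫ u in (0:ℝ)..t', g u := by
      intro t' h1 h2
      apply intervalIntegral.integral_congr_ae
      filter_upwards [hTne] with u hune hu
      rw [Set.uIoc_of_le h1] at hu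
      have hult : u < T := lt_of_le_of_ne (hu.2.trans h2) hune
      rw [hgg]; simp only [if_pos hult]
    have hF_eq : ∀ t ∈ Set.Ici (0:ℝ), F t = x + ∫ u in (0:ℝ)..t, gg u := by
      intro t ht
      rcases le_or_gt t T with h | h
      · rw [hFIcc t ⟨ht, h⟩, (hgp t ⟨ht, h⟩).2, hInt_eq_le t ht h]
      · have hFt : F t = αg t := hFge t h.le
        have i1 : IntervalIntegrable gg (volume : Measure ℝ) 0 T := by
          apply MeasureTheory.IntegrableOn.intervalIntegrable
          rw [Set.uIcc_of_le hT.le]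
          exact hgg_int T hT.le
        have i2 : IntervalIntegrable gg (volume : Measure ℝ) T t := by
          apply MeasureTheory.IntegrableOn.intervalIntegrable
          rw [Set.uIcc_of_le h.le]
          exact hggIccT t
        have hsplit := intervalIntegral.integral_add_adjacent_intervals i1 i2
        have e1 : (∫ u in (0:ℝ)..T, gg u) = f T - x := by
          rw [hInt_eq_le T hT.le le_rfl, (hgp T ⟨hT.le, le_rfl⟩).2]; abel
        have hftc2 : (∫ u in T..t, gg u) = αg t - αg T := by
          have hcongr : (∫ u in T..t, gg u) =
              ∫ u in T..t, -(gradient (Vf N γ) (αg u)) := by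
            apply intervalIntegral.integral_congr
            intro u hu
            rw [Set.uIcc_of_le h.le] at hu
            rw [hgg]; simp only [if_neg (not_lt.mpr hu.1), htl, max_eq_left hu.1]
          rw [hcongr]
          apply intervalIntegral.integral_eq_sub_of_hasDeriv_right_of_le h.le
            (hαgcont.mono (fun u hu => hu.1))
          · intro u hu
            exact (hαgd u hu.1.le).mono
              (fun z (hz : z ∈ Set.Ioi u) => le_trans hu.1.le (le_of_lt hz))
          · apply ContinuousOn.intervalIntegrable_of_Icc h.le
            exact (((grad_continuousOn hl hγ hper hinj).comp
              (hαgcont.mono (fun u hu => hu.1))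
              (fun u hu => hαgD u hu.1)).neg)
        rw [hFt, ← hsplit, e1, hftc2, ← hαgT]
        abel
    refine le_trans (iInf₂_le gg ⟨hggm, fun t ht => ⟨hgg_int t ht, hF_eq t ht⟩⟩) ?_
    apply le_of_eq
    congr 1
    rw [← Set.Icc_union_Ioi_eq_Ici hT.le,
      lintegral_union measurableSet_Ioi (Set.disjoint_left.mpr fun u hu hu' => absurd hu.2 (not_le.mpr hu'))]
    have hIoi : (∫⁻ u in Set.Ioi T,
        ENNReal.ofReal (‖gg u + gradient (Vf N γ) (F u)‖ ^ 2)) = 0 := by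
      have hz : ∀ u ∈ Set.Ioi T,
          ENNReal.ofReal (‖gg u + gradient (Vf N γ) (F u)‖ ^ 2) = (0:ℝ≥0∞) := by
        intro u hu
        have h1 : gg u = -(gradient (Vf N γ) (αg u)) := by
          rw [hgg]
          simp only [if_neg (not_lt.mpr (le_of_lt (Set.mem_Ioi.mp hu))), htl, max_eq_left (le_of_lt (Set.mem_Ioi.mp hu))]
        have h2 : F u = αg u := hFge u (le_of_lt (Set.mem_Ioi.mp hu))
        rw [h1, h2, neg_add_cancel, norm_zero]
        norm_num
      rw [setLIntegral_congr_fun_ae measurableSet_Ioi (Filter.Eventually.of_forall hz)]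
      exact lintegral_zero
    have hIcc : (∫⁻ u in Set.Icc (0:ℝ) T,
        ENNReal.ofReal (‖gg u + gradient (Vf N γ) (F u)‖ ^ 2)) =
        ∫⁻ u in Set.Icc (0:ℝ) T,
          ENNReal.ofReal (‖g u + gradient (Vf N γ) (f u)‖ ^ 2) := by
      apply setLIntegral_congr_fun_ae measurableSet_Icc
      filter_upwards [hTne] with u hune hu
      have hult : u < T := lt_of_le_of_ne hu.2 hune
      have h1 : gg u = g u := by rw [hgg]; simp only [if_pos hult]
      rw [h1, hFIcc u hu]
    rw [hIoi, hIcc, add_zero]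
  -- restriction inequality for the flow extension
  have hC1F : rateFunctional N (Vf N γ) x (Set.Icc 0 T) f ≤
      rateFunctional N (Vf N γ) x (Set.Ici 0) F :=
    rate_mono (Vf N γ) x T hT.le f F hFIcc
  constructor
  · apply le_antisymm
    · exact le_iInf fun G => le_iInf fun hG => rate_mono (Vf N γ) x T hT.le f G hG.2.2
    · exact le_trans (iInf₂_le F hFadm) hC2
  · exact ⟨F, hFadm, hFflow, le_antisymm hC2 hC1F⟩
end

section
/- Let g : ℝ → ℝ be twice continuously differentiable and l-periodic. Then there exists a constant M > 0 such that for all s, t ∈ ℝ with γ(s) ≠ γ(t): | g'(s)·Re( γ'(s)/(γ(s) − γ(t)) ) − g'(t)·Re( γ'(t)/(γ(s) − γ(t)) ) | ≤ M. (With g = f ∘ γ for f smooth near the curve, this is the finiteness of the constant C₁(Γ, f) = sup_{z≠w ∈ Γ} |∂_s f(z) Re(τ(z)/(z−w)) − ∂_s f(w) Re(τ(w)/(z−w))| used in the hydrodynamic limit.) -/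
open Function Set

/-- deriv of a periodic function is periodic. -/
lemma periodic_deriv' {E : Type*} [NormedAddCommGroup E] [NormedSpace ℝ E]
    {f : ℝ → E} {c : ℝ} (h : Function.Periodic f c) : Function.Periodic (deriv f) c := fun x => by
  rw [← deriv_comp_add_const f c x]
  exact congrFun (congrArg deriv (funext h)) x

/-- A continuous periodic function is bounded. -/
lemma periodic_bound {E : Type*} [NormedAddCommGroup E]
    {f : ℝ → E} {c : ℝ} (hc : 0 < c) (h : Function.Periodic f c) (hf : Continuous f) :
    ∃ B : ℝ, 0 ≤ B ∧ ∀ x, ‖f x‖ ≤ B := by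
  obtain ⟨B, hB⟩ := (isCompact_Icc (a := (0:ℝ)) (b := c)).exists_bound_of_continuousOn
    hf.continuousOn
  refine ⟨max B 0, le_max_right _ _, fun x => ?_⟩
  have hx : f x = f (c * Int.fract (x / c)) := by
    have : c * Int.fract (x / c) = x - ⌊x / c⌋ * c := by
      rw [Int.fract]; field_simp
    rw [this, h.sub_int_mul_eq]
  rw [hx]
  exact le_trans (hB _ ⟨by nlinarith [Int.fract_nonneg (x / c)], le_of_lt (by
    have := Int.fract_lt_one (x / c)
    nlinarith [Int.fract_nonneg (x / c)])⟩) (le_max_left _ _)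

lemma fract_reduce {E : Type*} {f : ℝ → E} {c : ℝ} (hc : 0 < c)
    (h : Function.Periodic f c) (x : ℝ) :
    f (c * Int.fract (x / c)) = f x ∧ c * Int.fract (x / c) ∈ Set.Ico 0 c ∧
      x - c * Int.fract (x / c) = ⌊x / c⌋ * c := by
  have key : c * Int.fract (x / c) = x - ⌊x / c⌋ * c := by
    rw [Int.fract]; field_simp
  refine ⟨by rw [key, h.sub_int_mul_eq], ⟨?_, ?_⟩, by rw [key]; ring⟩
  · nlinarith [Int.fract_nonneg (x / c)]
  · nlinarith [Int.fract_lt_one (x / c)]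

/-- Chord-arc: lower bound on chord length for `|s-t| ≤ l/2`. -/
lemma chord_arc (l : ℝ) (hl : 0 < l)
    (γ : ℝ → ℂ) (hγ : ContDiff ℝ 2 γ) (hper : Function.Periodic γ l)
    (hinj : Set.InjOn γ (Set.Ico 0 l)) (hunit : ∀ t, ‖deriv γ t‖ = 1) :
    ∃ c > 0, ∀ s t : ℝ, |s - t| ≤ l / 2 → c * |s - t| ≤ ‖γ s - γ t‖ := by
  have hγ1 : ContDiff ℝ 1 (deriv γ) := (contDiff_succ_iff_deriv.mp (by exact_mod_cast hγ : ContDiff ℝ (1+1) γ)).2.2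
  have hdγ : Differentiable ℝ γ := hγ.differentiable (by norm_num)
  have hddγ : Differentiable ℝ (deriv γ) := hγ1.differentiable (by norm_num)
  -- bound on second derivative
  obtain ⟨C, hC0, hC⟩ := periodic_bound hl (periodic_deriv' (periodic_deriv' hper))
    ((contDiff_succ_iff_deriv.mp (by exact_mod_cast hγ1 : ContDiff ℝ (0+1) (deriv γ))).2.2.continuous)
  -- γ' is Lipschitz with constant C
  have hlip : ∀ u v : ℝ, ‖deriv γ u - deriv γ v‖ ≤ C * |u - v| := by
    intro u v
    have := Convex.norm_image_sub_le_of_norm_deriv_le (f := deriv γ)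
      (fun x _ => hddγ x) (fun x _ => hC x)
      convex_univ (mem_univ v) (mem_univ u)
    simpa [Real.norm_eq_abs] using this
  set ε : ℝ := min (1 / (2 * (C + 1))) (l / 2) with hε
  have hε0 : 0 < ε := lt_min (by positivity) (by linarith)
  -- near-diagonal estimate
  have near : ∀ s t : ℝ, |s - t| ≤ ε → (1/2) * |s - t| ≤ ‖γ s - γ t‖ := by
    intro s t hst
    have key : ‖(γ s - s • deriv γ t) - (γ t - t • deriv γ t)‖ ≤ (1/2) * ‖s - t‖ := by
      have hb : ∀ x ∈ Set.uIcc t s, ‖deriv (fun u => γ u - u • deriv γ t) x‖ ≤ 1/2 := by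
        intro x hx
        have hdsmul : DifferentiableAt ℝ (fun u : ℝ => u • deriv γ t) x :=
          (differentiable_id.smul_const _) x
        rw [deriv_fun_sub (hdγ x) hdsmul]
        have h1 : deriv (fun u : ℝ => u • deriv γ t) x = deriv γ t := by
          have := deriv_smul_const (c := fun u : ℝ => u) (x := x)
            differentiableAt_fun_id (deriv γ t)
          simpa using this
        rw [h1]
        have h2 : |x - t| ≤ |s - t| := by
          rcases le_total t s with hts | hts
          · rw [Set.uIcc_of_le hts] at hx
            rw [abs_of_nonneg (by linarith [hx.1]), abs_of_nonneg (by linarith)]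
            linarith [hx.2]
          · rw [Set.uIcc_of_ge hts] at hx
            rw [abs_of_nonpos (by linarith [hx.2]), abs_of_nonpos (by linarith)]
            linarith [hx.1]
        have h3 := hlip x t
        have h4 : C * |x - t| ≤ C * ε := by
          apply mul_le_mul_of_nonneg_left (le_trans h2 hst) hC0
        have h5 : C * ε ≤ 1/2 := by
          have h6 : ε ≤ 1 / (2 * (C + 1)) := min_le_left _ _
          have h7 : C * ε ≤ C * (1 / (2 * (C + 1))) := mul_le_mul_of_nonneg_left h6 hC0
          have h8 : C * (1 / (2 * (C + 1))) ≤ 1/2 := by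
            rw [mul_one_div, div_le_div_iff₀ (by positivity) (by norm_num)]
            nlinarith
          linarith
        linarith [norm_nonneg (deriv γ x - deriv γ t)]
      have := Convex.norm_image_sub_le_of_norm_deriv_le (f := fun u => γ u - u • deriv γ t)
        (fun x _ => (hdγ x).sub ((differentiable_id.smul_const _) x))
        hb (convex_uIcc t s) Set.left_mem_uIcc Set.right_mem_uIcc
      simpa using this
    have h6 : ‖(s - t) • deriv γ t‖ = |s - t| := by
      rw [norm_smul, hunit, Real.norm_eq_abs, mul_one]
    have h7 : (γ s - s • deriv γ t) - (γ t - t • deriv γ t) = (γ s - γ t) - (s - t) • deriv γ t := by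
      rw [sub_smul]; ring_nf
    rw [h7] at key
    have := norm_sub_norm_le ((s - t) • deriv γ t) ((s - t) • deriv γ t - (γ s - γ t))
    rw [Real.norm_eq_abs] at key
    have h8 : ‖(s - t) • deriv γ t - (γ s - γ t)‖ = ‖γ s - γ t - (s - t) • deriv γ t‖ :=
      norm_sub_rev _ _
    calc (1/2) * |s - t| = |s - t| - (1/2) * |s - t| := by ring
    _ ≤ ‖(s - t) • deriv γ t‖ - ‖γ s - γ t - (s - t) • deriv γ t‖ := by
        rw [h6]; linarith
    _ ≤ ‖γ s - γ t‖ := by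
        have := norm_sub_norm_le ((s - t) • deriv γ t) (γ s - γ t)
        have h9 : ‖(s - t) • deriv γ t - (γ s - γ t)‖ = ‖γ s - γ t - (s - t) • deriv γ t‖ :=
          norm_sub_rev _ _
        linarith [this, h9 ▸ this]
  -- far part via compactness
  set A : Set (ℝ × ℝ) := (Icc 0 l ×ˢ Icc (-l) (2*l)) ∩
    {p : ℝ × ℝ | ε ≤ |p.1 - p.2| ∧ |p.1 - p.2| ≤ l / 2} with hA
  have hεl : ε ≤ l / 2 := min_le_right _ _
  have hAcomp : IsCompact A := by
    apply (isCompact_Icc.prod isCompact_Icc).inter_right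
    apply IsClosed.inter
    · exact isClosed_le continuous_const ((continuous_fst.sub continuous_snd).abs)
    · exact isClosed_le ((continuous_fst.sub continuous_snd).abs) continuous_const
  have hAne : A.Nonempty := by
    refine ⟨(0, ε), ⟨⟨le_refl 0, le_of_lt hl⟩, by constructor <;> linarith⟩, ?_, ?_⟩ <;>
      · simp only [zero_sub, abs_neg, abs_of_pos hε0]; linarith
  have hAinj : ∀ p ∈ A, γ p.1 ≠ γ p.2 := by
    rintro ⟨s, t⟩ ⟨⟨hs, ht⟩, hd1, hd2⟩ heq
    obtain ⟨hfs, hms, hds⟩ := fract_reduce hl hper s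
    obtain ⟨hft, hmt, hdt⟩ := fract_reduce hl hper t
    have heq' : l * Int.fract (s / l) = l * Int.fract (t / l) :=
      hinj hms hmt (by rw [hfs, hft]; exact heq)
    have hst : s - t = (⌊s / l⌋ - ⌊t / l⌋ : ℤ) * l := by
      push_cast
      have : s - t = (s - l * Int.fract (s / l)) - (t - l * Int.fract (t / l)) := by
        rw [heq']; ring
      rw [this, hds, hdt]; ring
    set k : ℤ := ⌊s / l⌋ - ⌊t / l⌋
    rcases eq_or_ne k 0 with hk | hk
    · rw [hk] at hst; simp at hst
      rw [hst] at hd1; simp at hd1; linarith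
    · have : (1 : ℝ) ≤ |(k : ℝ)| := by
        rw [← Int.cast_abs]
        exact_mod_cast Int.one_le_abs hk
      have : |s - t| = |(k : ℝ)| * l := by
        rw [hst, abs_mul, abs_of_pos hl]
      simp only [this] at hd2
      nlinarith
  obtain ⟨p₀, hp₀, hmin⟩ := hAcomp.exists_isMinOn hAne
    (Continuous.continuousOn
      (((hγ.continuous.comp continuous_fst).sub (hγ.continuous.comp continuous_snd)).norm))
  set m : ℝ := ‖γ p₀.1 - γ p₀.2‖ with hm
  have hm0 : 0 < m := by
    rw [hm, norm_pos_iff, sub_ne_zero]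
    exact hAinj p₀ hp₀
  have far : ∀ s t : ℝ, ε ≤ |s - t| → |s - t| ≤ l / 2 → m ≤ ‖γ s - γ t‖ := by
    intro s t h1 h2
    obtain ⟨hfs, hms, hds⟩ := fract_reduce hl hper s
    set s' := l * Int.fract (s / l) with hs'
    set t' := t - (s - s') with ht'
    have hγt' : γ t' = γ t := by
      rw [ht', hds]
      exact hper.sub_int_mul_eq _
    have hdiff : s' - t' = s - t := by rw [ht']; ring
    have hmem : (s', t') ∈ A := by
      refine ⟨⟨⟨hms.1, le_of_lt hms.2⟩, ?_, ?_⟩, ?_, ?_⟩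
      · have := abs_le.mp (hdiff ▸ h2); linarith [hms.1]
      · have := abs_le.mp (hdiff ▸ h2); linarith [le_of_lt hms.2]
      · simpa [hdiff] using h1
      · simpa [hdiff] using h2
    have := hmin hmem
    simpa [hfs, hγt'] using this
  refine ⟨min (1/2) (m / l), lt_min (by norm_num) (by positivity), fun s t hst => ?_⟩
  rcases le_or_gt |s - t| ε with hcase | hcase
  · calc min (1/2) (m / l) * |s - t| ≤ (1/2) * |s - t| :=
        mul_le_mul_of_nonneg_right (min_le_left _ _) (abs_nonneg _)
    _ ≤ ‖γ s - γ t‖ := near s t hcase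
  · calc min (1/2) (m / l) * |s - t| ≤ (m / l) * |s - t| :=
        mul_le_mul_of_nonneg_right (min_le_right _ _) (abs_nonneg _)
    _ ≤ (m / l) * l := mul_le_mul_of_nonneg_left (by linarith) (by positivity)
    _ = m := by field_simp
    _ ≤ ‖γ s - γ t‖ := far s t (le_of_lt hcase) hst


/-- Finiteness of the constant `C₁(Γ, f)` from the hydrodynamic limit: for an
`l`-periodic `C²` function `g` (think `g = f ∘ γ`), the symmetrized kernel
`g'(s)·Re(γ'(s)/(γ(s)−γ(t))) − g'(t)·Re(γ'(t)/(γ(s)−γ(t)))` is uniformly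
bounded over all `s, t` with `γ(s) ≠ γ(t)`. -/
theorem symmetrized_kernel_bounded
    (l : ℝ) (hl : 0 < l)
    (γ : ℝ → ℂ) (hγ : ContDiff ℝ 2 γ) (hper : Function.Periodic γ l)
    (hinj : Set.InjOn γ (Set.Ico 0 l)) (hunit : ∀ t, ‖deriv γ t‖ = 1)
    (g : ℝ → ℝ) (hg : ContDiff ℝ 2 g) (hgper : Function.Periodic g l) :
    ∃ M > 0, ∀ s t : ℝ, γ s ≠ γ t →
      |deriv g s * (deriv γ s / (γ s - γ t)).re
        - deriv g t * (deriv γ t / (γ s - γ t)).re| ≤ M := by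
  obtain ⟨c, hc0, hchord⟩ := chord_arc l hl γ hγ hper hinj hunit
  have hγ1 : ContDiff ℝ 1 (deriv γ) :=
    (contDiff_succ_iff_deriv.mp (by exact_mod_cast hγ : ContDiff ℝ (1+1) γ)).2.2
  have hg1 : ContDiff ℝ 1 (deriv g) :=
    (contDiff_succ_iff_deriv.mp (by exact_mod_cast hg : ContDiff ℝ (1+1) g)).2.2
  set h : ℝ → ℂ := fun u => Complex.ofReal (deriv g u) * deriv γ u with hh
  have pdγ : Function.Periodic (deriv γ) l := periodic_deriv' hper
  have pdg : Function.Periodic (deriv g) l := periodic_deriv' hgper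
  have hhper : Function.Periodic h l := fun x => by
    simp only [hh, pdγ x, pdg x]
  have hh1 : ContDiff ℝ 1 h :=
    (Complex.ofRealCLM.contDiff.comp hg1).mul hγ1
  have hdh : Differentiable ℝ h := hh1.differentiable (by norm_num)
  have hdhc : Continuous (deriv h) :=
    ((contDiff_succ_iff_deriv.mp (by exact_mod_cast hh1 : ContDiff ℝ (0+1) h)).2.2).continuous
  obtain ⟨B, hB0, hB⟩ := periodic_bound hl (periodic_deriv' hhper) hdhc
  have hLip : ∀ u v : ℝ, ‖h u - h v‖ ≤ B * |u - v| := by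
    intro u v
    have := Convex.norm_image_sub_le_of_norm_deriv_le (f := h)
      (fun x _ => hdh x) (fun x _ => hB x)
      convex_univ (Set.mem_univ v) (Set.mem_univ u)
    simpa [Real.norm_eq_abs] using this
  refine ⟨B / c + 1, by positivity, fun s t hne => ?_⟩
  set k : ℤ := round ((s - t) / l) with hk
  set t' : ℝ := t + k * l with ht'
  have hγt' : γ t' = γ t := (hper.int_mul k) t
  have hdγt' : deriv γ t' = deriv γ t := (pdγ.int_mul k) t
  have hdgt' : deriv g t' = deriv g t := (pdg.int_mul k) t
  have hht' : h t' = h t := (hhper.int_mul k) t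
  have hd : |s - t'| ≤ l / 2 := by
    have : s - t' = ((s - t) / l - k) * l := by
      rw [ht']; field_simp; ring
    rw [this, abs_mul, abs_of_pos hl]
    have := abs_sub_round ((s - t) / l)
    nlinarith
  have hne' : γ s ≠ γ t' := by rw [hγt']; exact hne
  have hst' : s ≠ t' := fun hc => hne' (by rw [hc])
  have hpos : 0 < |s - t'| := abs_pos.mpr (sub_ne_zero.mpr hst')
  have hchord' := hchord s t' hd
  have hwpos : 0 < ‖γ s - γ t‖ := by
    rw [norm_pos_iff, sub_ne_zero]; exact hne
  set w : ℂ := γ s - γ t with hw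
  have hkey : deriv g s * (deriv γ s / w).re - deriv g t * (deriv γ t / w).re
      = ((h s - h t) / w).re := by
    rw [hh]
    simp only [sub_div, Complex.sub_re, mul_div_assoc, Complex.re_ofReal_mul]
  rw [hkey]
  have h1 : |((h s - h t) / w).re| ≤ ‖(h s - h t) / w‖ := Complex.abs_re_le_norm _
  have h2 : ‖(h s - h t) / w‖ = ‖h s - h t‖ / ‖w‖ := norm_div _ _
  have h3 : ‖h s - h t‖ ≤ B * |s - t'| := by rw [← hht']; exact hLip s t'
  have h4 : c * |s - t'| ≤ ‖w‖ := by
    rw [hw, ← hγt']; exact hchord'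
  have h5 : ‖h s - h t‖ / ‖w‖ ≤ (B * |s - t'|) / (c * |s - t'|) := by
    apply div_le_div₀ (by positivity) h3 (by positivity) h4
  have h6 : (B * |s - t'|) / (c * |s - t'|) = B / c := by
    rw [mul_div_mul_right _ _ (ne_of_gt hpos)]
  linarith [h1, h2 ▸ h1, h5, h6 ▸ h5]
end
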